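/- arXiv:2112.05072 — 2 statements merged into one kernel-verified Lean document; each statement's English description precedes it below -/
import Mathlib

section
/- For every differentiable curve (q1, q2, p1, p2) : ℝ → ℂ⁴ satisfying Hamilton's equations q1' = p1, q2' = p2, p1' = −∂V/∂q1, p2' = −∂V/∂q2 for the potential V(q1,q2) = (q1 − i q2)⁵ (q1 + i q2)², the function J = −(p1 − i p2)³(p1 + i p2)(q1 − i q2) + (1/4)(p1 + i p2)²(q1 − i q2)⁸ + (p1 − i p2)⁴(q1 + i q2) − 2(p1 − i p2)(p1 + i p2)(q1 − i q2)⁷(q1 + i q2) + (p1 − i p2)²(q1 − i q2)⁶(q1 + i q2)² − (q1 − i q2)¹²(q1 + i q2)³ evaluated along the curve has derivative identically zero; that is, J is a polynomial first integral of the Hamiltonian system with the degree-seven exceptional potential V_{7,2}. -/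
open Complex

private lemma hda_pow {f : ℝ → ℂ} {f' : ℂ} {t : ℝ} (n : ℕ)
    (h : HasDerivAt f f' t) :
    HasDerivAt (fun t => f t ^ n) ((n : ℂ) * f t ^ (n - 1) * f') t := by
  exact h.fun_pow n

/-- `J` (below) is a polynomial first integral of the Hamiltonian system with the
degree-seven exceptional potential `V_{7,2} = (q1 - i q2)⁵ (q1 + i q2)²`.  Here
`∂V/∂q1 = 5(q1 - i q2)⁴(q1 + i q2)² + 2(q1 - i q2)⁵(q1 + i q2)` and
`∂V/∂q2 = -5i(q1 - i q2)⁴(q1 + i q2)² + 2i(q1 - i q2)⁵(q1 + i q2)`. -/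
theorem stmt_13 (q1 q2 p1 p2 : ℝ → ℂ)
    (hq1 : ∀ t, HasDerivAt q1 (p1 t) t)
    (hq2 : ∀ t, HasDerivAt q2 (p2 t) t)
    (hp1 : ∀ t, HasDerivAt p1
      (-(5 * (q1 t - I * q2 t) ^ 4 * (q1 t + I * q2 t) ^ 2
        + 2 * (q1 t - I * q2 t) ^ 5 * (q1 t + I * q2 t))) t)
    (hp2 : ∀ t, HasDerivAt p2
      (-(-5 * I * (q1 t - I * q2 t) ^ 4 * (q1 t + I * q2 t) ^ 2
        + 2 * I * (q1 t - I * q2 t) ^ 5 * (q1 t + I * q2 t))) t) :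
    ∀ t, HasDerivAt (fun t =>
        -((p1 t - I * p2 t) ^ 3 * (p1 t + I * p2 t) * (q1 t - I * q2 t))
          + (1 / 4 : ℂ) * (p1 t + I * p2 t) ^ 2 * (q1 t - I * q2 t) ^ 8
          + (p1 t - I * p2 t) ^ 4 * (q1 t + I * q2 t)
          - 2 * (p1 t - I * p2 t) * (p1 t + I * p2 t) * (q1 t - I * q2 t) ^ 7
              * (q1 t + I * q2 t)
          + (p1 t - I * p2 t) ^ 2 * (q1 t - I * q2 t) ^ 6 * (q1 t + I * q2 t) ^ 2
          - (q1 t - I * q2 t) ^ 12 * (q1 t + I * q2 t) ^ 3) 0 t := by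
  intro t
  have e1 : HasDerivAt (fun t => q1 t - I * q2 t) (p1 t - I * p2 t) t :=
    (hq1 t).sub ((hq2 t).const_mul I)
  have e2 : HasDerivAt (fun t => q1 t + I * q2 t) (p1 t + I * p2 t) t :=
    (hq1 t).add ((hq2 t).const_mul I)
  have e3 : HasDerivAt (fun t => p1 t - I * p2 t)
      (-4 * (q1 t - I * q2 t) ^ 5 * (q1 t + I * q2 t)) t := by
    have h := (hp1 t).sub ((hp2 t).const_mul I)
    refine h.congr_deriv ?_
    linear_combination (-1 : ℂ) * (5 * (q1 t - I * q2 t) ^ 4 * (q1 t + I * q2 t) ^ 2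
      - 2 * (q1 t - I * q2 t) ^ 5 * (q1 t + I * q2 t)) * Complex.I_sq
  have e4 : HasDerivAt (fun t => p1 t + I * p2 t)
      (-10 * (q1 t - I * q2 t) ^ 4 * (q1 t + I * q2 t) ^ 2) t := by
    have h := (hp1 t).add ((hp2 t).const_mul I)
    refine h.congr_deriv ?_
    linear_combination (-1 : ℂ) * (2 * (q1 t - I * q2 t) ^ 5 * (q1 t + I * q2 t)
      - 5 * (q1 t - I * q2 t) ^ 4 * (q1 t + I * q2 t) ^ 2) * Complex.I_sq
  have t1 := (((hda_pow 3 e3).mul e4).mul e1).neg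
  have t2 := ((hda_pow 2 e4).const_mul (1 / 4 : ℂ)).mul (hda_pow 8 e1)
  have t3 := (hda_pow 4 e3).mul e2
  have t4 := (((e3.const_mul 2).mul e4).mul (hda_pow 7 e1)).mul e2
  have t5 := ((hda_pow 2 e3).mul (hda_pow 6 e1)).mul (hda_pow 2 e2)
  have t6 := (hda_pow 12 e1).mul (hda_pow 3 e2)
  have big := ((((t1.add t2).add t3).sub t4).add t5).sub t6
  refine big.congr_deriv ?_
  simp only [Pi.mul_apply]
  ring
end

section
/- For every differentiable curve (q1, q2, p1, p2) : ℝ → ℂ⁴ satisfying Hamilton's equations q1' = p1, q2' = p2, p1' = −∂V/∂q1, p2' = −∂V/∂q2 for the potential V(q1,q2) = (q1 − i q2)² (q1 + i q2)⁵, the function J = (p1 + i p2)⁴(q1 − i q2) − (p1 − i p2)(p1 + i p2)³(q1 + i q2) + (p1 + i p2)²(q1 − i q2)²(q1 + i q2)⁶ − 2(p1 − i p2)(p1 + i p2)(q1 − i q2)(q1 + i q2)⁷ + (1/4)(p1 − i p2)²(q1 + i q2)⁸ − (q1 − i q2)³(q1 + i q2)¹² evaluated along the curve has derivative identically zero; that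 is, J is a polynomial first integral, functionally different from the Hamiltonian, of the Hamiltonian system with the degree-seven exceptional potential V_{7,5}. -/
open Complex


private lemma hasDerivAt_pow_comp {f : ℝ → ℂ} {f' : ℂ} {t : ℝ}
    (h : HasDerivAt f f' t) (n : ℕ) :
    HasDerivAt (fun t => f t ^ (n + 1)) ((n + 1 : ℂ) * f t ^ n * f') t := by
  induction n with
  | zero => simpa using h
  | succ n ih =>
    have := ih.mul h
    refine this.congr_deriv ?_
    push_cast; ring

/-- `J` (below) is a polynomial first integral of the Hamiltonian system with the
degree-seven exceptional potential `V_{7,5} = (q1 - i q2)² (q1 + i q2)⁵`.  Here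
`∂V/∂q1 = 2(q1 - i q2)(q1 + i q2)⁵ + 5(q1 - i q2)²(q1 + i q2)⁴` and
`∂V/∂q2 = -2i(q1 - i q2)(q1 + i q2)⁵ + 5i(q1 - i q2)²(q1 + i q2)⁴`. -/
theorem stmt_14 (q1 q2 p1 p2 : ℝ → ℂ)
    (hq1 : ∀ t, HasDerivAt q1 (p1 t) t)
    (hq2 : ∀ t, HasDerivAt q2 (p2 t) t)
    (hp1 : ∀ t, HasDerivAt p1
      (-(2 * (q1 t - I * q2 t) * (q1 t + I * q2 t) ^ 5
        + 5 * (q1 t - I * q2 t) ^ 2 * (q1 t + I * q2 t) ^ 4)) t)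
    (hp2 : ∀ t, HasDerivAt p2
      (-(-2 * I * (q1 t - I * q2 t) * (q1 t + I * q2 t) ^ 5
        + 5 * I * (q1 t - I * q2 t) ^ 2 * (q1 t + I * q2 t) ^ 4)) t) :
    ∀ t, HasDerivAt (fun t =>
        (p1 t + I * p2 t) ^ 4 * (q1 t - I * q2 t)
          - (p1 t - I * p2 t) * (p1 t + I * p2 t) ^ 3 * (q1 t + I * q2 t)
          + (p1 t + I * p2 t) ^ 2 * (q1 t - I * q2 t) ^ 2 * (q1 t + I * q2 t) ^ 6
          - 2 * (p1 t - I * p2 t) * (p1 t + I * p2 t) * (q1 t - I * q2 t)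
              * (q1 t + I * q2 t) ^ 7
          + (1 / 4 : ℂ) * (p1 t - I * p2 t) ^ 2 * (q1 t + I * q2 t) ^ 8
          - (q1 t - I * q2 t) ^ 3 * (q1 t + I * q2 t) ^ 12) 0 t := by
  intro t
  have hU : HasDerivAt (fun t => q1 t + I * q2 t) (p1 t + I * p2 t) t :=
    (hq1 t).add ((hq2 t).const_mul I)
  have hV : HasDerivAt (fun t => q1 t - I * q2 t) (p1 t - I * p2 t) t :=
    (hq1 t).sub ((hq2 t).const_mul I)
  have hA : HasDerivAt (fun t => p1 t + I * p2 t)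
      (-4 * (q1 t - I * q2 t) * (q1 t + I * q2 t) ^ 5) t := by
    have h := (hp1 t).add ((hp2 t).const_mul I)
    refine h.congr_deriv ?_; symm
    linear_combination (-2 * (q1 t - I * q2 t) * (q1 t + I * q2 t) ^ 5
      + 5 * (q1 t - I * q2 t) ^ 2 * (q1 t + I * q2 t) ^ 4) * Complex.I_sq
  have hB : HasDerivAt (fun t => p1 t - I * p2 t)
      (-10 * (q1 t - I * q2 t) ^ 2 * (q1 t + I * q2 t) ^ 4) t := by
    have h := (hp1 t).sub ((hp2 t).const_mul I)
    refine h.congr_deriv ?_; symm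
    linear_combination (2 * (q1 t - I * q2 t) * (q1 t + I * q2 t) ^ 5
      - 5 * (q1 t - I * q2 t) ^ 2 * (q1 t + I * q2 t) ^ 4) * Complex.I_sq
  have h1 := (hasDerivAt_pow_comp hA 3).mul hV
  have h2 := (hB.mul (hasDerivAt_pow_comp hA 2)).mul hU
  have h3 := ((hasDerivAt_pow_comp hA 1).mul (hasDerivAt_pow_comp hV 1)).mul (hasDerivAt_pow_comp hU 5)
  have h4 := (((hB.const_mul 2).mul hA).mul hV).mul (hasDerivAt_pow_comp hU 6)
  have h5 := ((hasDerivAt_pow_comp hB 1).const_mul (1 / 4 : ℂ)).mul (hasDerivAt_pow_comp hU 7)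
  have h6 := (hasDerivAt_pow_comp hV 2).mul (hasDerivAt_pow_comp hU 11)
  have H := ((((h1.sub h2).add h3).sub h4).add h5).sub h6
  refine H.congr_deriv ?_; symm
  simp only [Pi.mul_apply]
  push_cast
  ring
end
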